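/- arXiv:1806.06908 — 2 statements merged into one kernel-verified Lean document; each statement's English description precedes it below -/
import Mathlib

section
/- For all g₁, g₂ > 0 and all t₁, t₂ ∈ (0,1), the infimum inf_{a ∈ [0,1]} { g₁·KL(a‖t₁) + g₂·KL(a‖t₂) } equals −(g₁+g₂)·log[ (1−t₁)^{g₁/(g₁+g₂)}·(1−t₂)^{g₂/(g₁+g₂)} + t₁^{g₁/(g₁+g₂)}·t₂^{g₂/(g₁+g₂)} ]. -/
/-- Bernoulli Kullback–Leibler divergence `KL(a‖b)`, with the convention `0·log 0 = 0`. -/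
noncomputable def klBer (a b : ℝ) : ℝ :=
  a * Real.log (a / b) + (1 - a) * Real.log ((1 - a) / (1 - b))

/-!
For fixed `a`, `KL(a‖b)` is the negative entropy of `a` minus `a log b + (1 - a) log (1 - b)`,
so a weighted sum `g₁ KL(a‖t₁) + g₂ KL(a‖t₂)` is, up to the factor `G = g₁ + g₂`, again of this
form with `log b`, `log (1 - b)` replaced by the logarithms of the weighted geometric means `p` of
`t₁, t₂` and `q` of `1 - t₁, 1 - t₂`. Normalising `p, q` into a probability `a⋆ = p / (p + q)`
gives `g₁ KL(a‖t₁) + g₂ KL(a‖t₂) = G (KL(a‖a⋆) - log (p + q))`, and Gibbs' inequality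
`KL(a‖a⋆) ≥ 0`, with equality at `a = a⋆`, identifies the infimum as `-G log (p + q)`.
-/

open Real Set InformationTheory

lemma mul_log_div_eq_sub (a : ℝ) {b : ℝ} (hb : b ≠ 0) :
    a * log (a / b) = a * log a - a * log b := by
  rcases eq_or_ne a 0 with rfl | ha
  · simp
  · rw [log_div ha hb, mul_sub]

lemma klBer_self (b : ℝ) : klBer b b = 0 := by
  simp [klBer]

lemma klBer_eq_sub (a : ℝ) {b : ℝ} (hb₀ : b ≠ 0) (hb₁ : 1 - b ≠ 0) :
    klBer a b = a * log a + (1 - a) * log (1 - a) - (a * log b + (1 - a) * log (1 - b)) := by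
  rw [klBer, mul_log_div_eq_sub a hb₀, mul_log_div_eq_sub (1 - a) hb₁]
  ring

lemma klBer_eq_klFun (a : ℝ) {b : ℝ} (hb₀ : b ≠ 0) (hb₁ : 1 - b ≠ 0) :
    klBer a b = b * klFun (a / b) + (1 - b) * klFun ((1 - a) / (1 - b)) := by
  simp only [klBer, klFun_apply]
  field_simp
  ring

lemma klBer_nonneg {a b : ℝ} (ha : a ∈ Icc 0 1) (hb : b ∈ Ioo 0 1) : 0 ≤ klBer a b := by
  obtain ⟨ha₀, ha₁⟩ := ha
  obtain ⟨hb₀, hb₁⟩ := hb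
  have hb₁' : 0 < 1 - b := sub_pos.2 hb₁
  rw [klBer_eq_klFun a hb₀.ne' hb₁'.ne']
  exact add_nonneg (mul_nonneg hb₀.le (klFun_nonneg (div_nonneg ha₀ hb₀.le)))
    (mul_nonneg hb₁'.le (klFun_nonneg (div_nonneg (sub_nonneg.2 ha₁) hb₁'.le)))

lemma klBer_div_add (a : ℝ) {p q : ℝ} (hp : 0 < p) (hq : 0 < q) :
    klBer a (p / (p + q)) =
      a * log a + (1 - a) * log (1 - a) - (a * log p + (1 - a) * log q) + log (p + q) := by
  have hpq : 0 < p + q := add_pos hp hq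
  have hsub : 1 - p / (p + q) = q / (p + q) := by field_simp; ring
  rw [klBer_eq_sub a (div_pos hp hpq).ne' (hsub ▸ (div_pos hq hpq).ne'), hsub,
    log_div hp.ne' hpq.ne', log_div hq.ne' hpq.ne']
  ring

noncomputable def weightedGeomMean (g₁ g₂ x y : ℝ) : ℝ :=
  x ^ (g₁ / (g₁ + g₂)) * y ^ (g₂ / (g₁ + g₂))

lemma weightedGeomMean_pos (g₁ g₂ : ℝ) {x y : ℝ} (hx : 0 < x) (hy : 0 < y) :
    0 < weightedGeomMean g₁ g₂ x y :=
  mul_pos (rpow_pos_of_pos hx _) (rpow_pos_of_pos hy _)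

lemma mul_log_weightedGeomMean {g₁ g₂ x y : ℝ} (hG : g₁ + g₂ ≠ 0) (hx : 0 < x) (hy : 0 < y) :
    (g₁ + g₂) * log (weightedGeomMean g₁ g₂ x y) = g₁ * log x + g₂ * log y := by
  rw [weightedGeomMean, log_mul (rpow_pos_of_pos hx _).ne' (rpow_pos_of_pos hy _).ne',
    log_rpow hx, log_rpow hy]
  field_simp

lemma weighted_klBer_eq (a : ℝ) {g₁ g₂ t₁ t₂ p q : ℝ}
    (ht₁ : t₁ ∈ Ioo 0 1) (ht₂ : t₂ ∈ Ioo 0 1) (hp : 0 < p) (hq : 0 < q)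
    (hlogp : (g₁ + g₂) * log p = g₁ * log t₁ + g₂ * log t₂)
    (hlogq : (g₁ + g₂) * log q = g₁ * log (1 - t₁) + g₂ * log (1 - t₂)) :
    g₁ * klBer a t₁ + g₂ * klBer a t₂ = (g₁ + g₂) * (klBer a (p / (p + q)) - log (p + q)) := by
  rw [klBer_div_add a hp hq, klBer_eq_sub a ht₁.1.ne' (sub_pos.2 ht₁.2).ne',
    klBer_eq_sub a ht₂.1.ne' (sub_pos.2 ht₂.2).ne']
  linear_combination a * hlogp + (1 - a) * hlogq

/-- **Closed form for the pairwise large-deviations rate.**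
For `g₁, g₂ > 0` and `t₁, t₂ ∈ (0,1)`,
`inf_{a ∈ [0,1]} { g₁ KL(a‖t₁) + g₂ KL(a‖t₂) }
  = -(g₁+g₂) log[(1-t₁)^{g₁/(g₁+g₂)} (1-t₂)^{g₂/(g₁+g₂)} + t₁^{g₁/(g₁+g₂)} t₂^{g₂/(g₁+g₂)}]`. -/
theorem inf_weighted_klBer_eq
    (g₁ g₂ t₁ t₂ : ℝ) (hg₁ : 0 < g₁) (hg₂ : 0 < g₂)
    (ht₁ : t₁ ∈ Set.Ioo (0 : ℝ) 1) (ht₂ : t₂ ∈ Set.Ioo (0 : ℝ) 1) :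
    (⨅ a : Set.Icc (0 : ℝ) 1, g₁ * klBer a t₁ + g₂ * klBer a t₂)
      = -(g₁ + g₂) *
        Real.log ((1 - t₁) ^ (g₁ / (g₁ + g₂)) * (1 - t₂) ^ (g₂ / (g₁ + g₂))
          + t₁ ^ (g₁ / (g₁ + g₂)) * t₂ ^ (g₂ / (g₁ + g₂))) := by
  have hG : 0 < g₁ + g₂ := add_pos hg₁ hg₂
  have hu₁ : 0 < 1 - t₁ := sub_pos.2 ht₁.2
  have hu₂ : 0 < 1 - t₂ := sub_pos.2 ht₂.2
  set p := weightedGeomMean g₁ g₂ t₁ t₂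
  set q := weightedGeomMean g₁ g₂ (1 - t₁) (1 - t₂)
  have hp : 0 < p := weightedGeomMean_pos g₁ g₂ ht₁.1 ht₂.1
  have hq : 0 < q := weightedGeomMean_pos g₁ g₂ hu₁ hu₂
  have key (a : ℝ) := weighted_klBer_eq a ht₁ ht₂ hp hq
    (mul_log_weightedGeomMean hG.ne' ht₁.1 ht₂.1) (mul_log_weightedGeomMean hG.ne' hu₁ hu₂)
  have hmin : p / (p + q) ∈ Ioo (0 : ℝ) 1 :=
    ⟨div_pos hp (add_pos hp hq), (div_lt_one (add_pos hp hq)).2 (lt_add_of_pos_right p hq)⟩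
  have hleast : IsLeast (range fun a : Icc (0 : ℝ) 1 => g₁ * klBer a t₁ + g₂ * klBer a t₂)
      (-(g₁ + g₂) * log (p + q)) := by
    refine ⟨⟨⟨p / (p + q), Ioo_subset_Icc_self hmin⟩, ?_⟩, ?_⟩
    · simp only [key, klBer_self]
      ring
    · refine forall_mem_range.2 fun a => ?_
      have := mul_nonneg hG.le (klBer_nonneg a.2 hmin)
      rw [key]
      linarith
  rw [hleast.isGLB.ciInf_eq, add_comm p q]
  rfl
end

section
/- Let M ≥ 3, let k ∈ {1,…,M−2}, and let g₁,…,g_{M−2} > 0 and g̃₁,…,g̃_{M−2} > 0 be two weight vectors such that g_j ≥ g̃_j for all j ∈ {k+1,…,M−2}, g_j ≤ g̃_j for all j ∈ {1,…,k−1}, and g_k = g̃_k. Let t* and t̃* be the equalized solutions for the weights g and g̃, respectively. Then t*_k ≥ t̃*_k. -/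
/-- The pairwise large-deviations rate
`r_{g,h}(p,q) = -(g+h)·log[(1-p)^{g/(g+h)}·(1-q)^{h/(g+h)} + p^{g/(g+h)}·q^{h/(g+h)}]`. -/
noncomputable def pairRate (g h p q : ℝ) : ℝ :=
  -(g + h) *
    Real.log ((1 - p) ^ (g / (g + h)) * (1 - q) ^ (h / (g + h))
      + p ^ (g / (g + h)) * q ^ (h / (g + h)))

/-- The `i`-th rate (for `1 ≤ i ≤ M-1`) of a level vector `t` with weights `g`:
`r₁ = -g₁·log(1-t₁)`, `rᵢ = r_{g_{i-1},g_i}(t_{i-1},t_i)` for `2 ≤ i ≤ M-2`, and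
`r_{M-1} = -g_{M-2}·log(t_{M-2})`. -/
noncomputable def rateAt (M : ℕ) (g t : ℕ → ℝ) (i : ℕ) : ℝ :=
  if i = 1 then -(g 1) * Real.log (1 - t 1)
  else if i = M - 1 then -(g (M - 2)) * Real.log (t (M - 2))
  else pairRate (g (i - 1)) (g i) (t (i - 1)) (t i)

/-- `t` is an equalized solution with `M` levels for the weights `g`, with common rate `r`:
`t₀ = 0 < t₁ < ⋯ < t_{M-2} < 1 = t_{M-1}` and all of the `M-1` rates equal `r`. -/
def IsEqualizedWithRate (M : ℕ) (g t : ℕ → ℝ) (r : ℝ) : Prop :=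
  t 0 = 0 ∧ t (M - 1) = 1 ∧ (∀ i, i < M - 1 → t i < t (i + 1)) ∧
    ∀ i, 1 ≤ i → i ≤ M - 1 → rateAt M g t i = r

/-- `t` is an equalized solution with `M` levels for the weights `g`. -/
def IsEqualizedSol (M : ℕ) (g t : ℕ → ℝ) : Prop :=
  ∃ r, IsEqualizedWithRate M g t r

/-!
Writing `r_{g,h}(p,q) = -(g+h) log C_{g/(g+h)}(p,q)` with the Chernoff coefficient
`C_a(p,q) = (1-p)^a (1-q)^(1-a) + p^a q^(1-a)` of two Bernoulli laws: for `p < q` the rate is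
increasing in both weights (`a ↦ log C_a` is convex and vanishes at `a = 1`), decreasing in `p`
and increasing in `q` (`q ↦ C_a(p,q)` is strictly concave with maximum `1` at `q = p`).

Suppose `t_k < t̃_k`. If `r ≤ r̃` for the common rates, these monotonicities propagate the gap
`t_j < t̃_j` from `j = k` up to `j = M-2`, where the last rate gives `r̃ < r`. Reflecting the
problem (`t_i ↦ 1 - t_{M-1-i}`, weights reversed) exchanges the weights below `k` with those above,
so the same argument also gives `r < r̃`.
-/

open Real Set

lemma add_rpow_mul_rpow_le {s u₁ u₂ v₁ v₂ : ℝ} (hs₀ : 0 ≤ s) (hs₁ : s ≤ 1)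
    (hu₁ : 0 < u₁) (hu₂ : 0 < u₂) (hv₁ : 0 < v₁) (hv₂ : 0 < v₂) :
    u₁ ^ (1 - s) * v₁ ^ s + u₂ ^ (1 - s) * v₂ ^ s ≤ (u₁ + u₂) ^ (1 - s) * (v₁ + v₂) ^ s := by
  set U := u₁ + u₂
  set V := v₁ + v₂
  have hU : 0 < U := by positivity
  have hV : 0 < V := by positivity
  -- weighted AM-GM applied to the normalized terms `u / U` and `v / V`
  have term : ∀ u v, 0 < u → 0 < v →
      u ^ (1 - s) * v ^ s ≤ U ^ (1 - s) * V ^ s * ((1 - s) * (u / U) + s * (v / V)) := by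
    intro u v hu hv
    have amgm := geom_mean_le_arith_mean2_weighted (sub_nonneg.2 hs₁) hs₀
      (div_nonneg hu.le hU.le) (div_nonneg hv.le hV.le) (by ring)
    rw [div_rpow hu.le hU.le, div_rpow hv.le hV.le] at amgm
    calc u ^ (1 - s) * v ^ s
        = U ^ (1 - s) * V ^ s * (u ^ (1 - s) / U ^ (1 - s) * (v ^ s / V ^ s)) := by field_simp
      _ ≤ _ := by gcongr
  calc _ ≤ U ^ (1 - s) * V ^ s * ((1 - s) * (u₁ / U) + s * (v₁ / V))
        + U ^ (1 - s) * V ^ s * ((1 - s) * (u₂ / U) + s * (v₂ / V)) :=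
        add_le_add (term u₁ v₁ hu₁ hv₁) (term u₂ v₂ hu₂ hv₂)
    _ = U ^ (1 - s) * V ^ s := by field_simp; ring

noncomputable def chernoffCoeff (a p q : ℝ) : ℝ :=
  (1 - p) ^ a * (1 - q) ^ (1 - a) + p ^ a * q ^ (1 - a)

section chernoffCoeff

variable {a p q : ℝ}

lemma chernoffCoeff_pos (hp₀ : 0 < p) (hp₁ : p < 1) (hq₀ : 0 < q) (hq₁ : q < 1) :
    0 < chernoffCoeff a p q := by
  have : 0 < 1 - p := by linarith
  have : 0 < 1 - q := by linarith
  unfold chernoffCoeff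
  positivity

lemma chernoffCoeff_self (hp₀ : 0 ≤ p) (hp₁ : p ≤ 1) : chernoffCoeff a p p = 1 := by
  simp only [chernoffCoeff, ← rpow_add' (sub_nonneg.2 hp₁) (by simp : a + (1 - a) ≠ 0),
    ← rpow_add' hp₀ (by simp : a + (1 - a) ≠ 0), add_sub_cancel, rpow_one]
  ring

lemma chernoffCoeff_le_one (ha₀ : 0 ≤ a) (ha₁ : a ≤ 1) (hp₀ : 0 ≤ p) (hp₁ : p ≤ 1)
    (hq₀ : 0 ≤ q) (hq₁ : q ≤ 1) : chernoffCoeff a p q ≤ 1 := by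
  have h₀ := geom_mean_le_arith_mean2_weighted ha₀ (sub_nonneg.2 ha₁) (sub_nonneg.2 hp₁)
    (sub_nonneg.2 hq₁) (by ring)
  have h₁ := geom_mean_le_arith_mean2_weighted ha₀ (sub_nonneg.2 ha₁) hp₀ hq₀ (by ring)
  unfold chernoffCoeff
  linarith

/-- Strict concavity in `q`, together with the maximum `1` at `q = p`. -/
lemma chernoffCoeff_lt_chernoffCoeff_right {q' : ℝ} (ha₀ : 0 < a) (ha₁ : a < 1) (hp : 0 < p) (hpq : p < q)
    (hqq' : q < q') (hq' : q' ≤ 1) : chernoffCoeff a p q' < chernoffCoeff a p q := by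
  set θ := (q' - q) / (q' - p)
  have hθ₀ : 0 < θ := div_pos (by linarith) (by linarith)
  have hθ₁ : 0 < 1 - θ := by
    rw [sub_pos, div_lt_one (by linarith)]; linarith
  have hq : θ * p + (1 - θ) * q' = q := by
    have : q' - p ≠ 0 := (sub_pos.2 (hpq.trans hqq')).ne'
    simp only [θ]; field_simp; ring
  have hq₁ : θ * (1 - p) + (1 - θ) * (1 - q') = 1 - q := by linear_combination -hq
  have hconc := strictConcaveOn_rpow (sub_pos.2 ha₁) (sub_lt_self 1 ha₀)
  have hlow := hconc.concaveOn.2 (mem_Ici.2 (by linarith : (0 : ℝ) ≤ 1 - p))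
    (mem_Ici.2 (by linarith : (0 : ℝ) ≤ 1 - q')) hθ₀.le hθ₁.le (by ring)
  have hhigh := hconc.2 (mem_Ici.2 hp.le) (mem_Ici.2 (by linarith : (0 : ℝ) ≤ q'))
    (by linarith : p ≠ q') hθ₀ hθ₁ (by ring)
  simp only [smul_eq_mul, hq, hq₁] at hlow hhigh
  have hself := chernoffCoeff_self (a := a) hp.le (by linarith)
  have hle := chernoffCoeff_le_one ha₀.le ha₁.le hp.le (by linarith) (by linarith) hq'
  have hA : 0 ≤ (1 - p) ^ a := rpow_nonneg (by linarith) a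
  have hB : 0 < p ^ a := rpow_pos_of_pos hp a
  unfold chernoffCoeff at *
  nlinarith [mul_le_mul_of_nonneg_left hlow hA, mul_lt_mul_of_pos_left hhigh hB,
    mul_nonneg hθ₀.le (sub_nonneg.2 hle)]

/-- Log-convexity in the exponent, between `a` and the endpoint `1` where the coefficient is `1`. -/
lemma chernoffCoeff_le_rpow {s : ℝ} (hs₀ : 0 ≤ s) (hs₁ : s ≤ 1) (hp₀ : 0 < p) (hp₁ : p < 1)
    (hq₀ : 0 < q) (hq₁ : q < 1) :
    chernoffCoeff (s * a + (1 - s)) p q ≤ chernoffCoeff a p q ^ s := by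
  have split : ∀ x y : ℝ, 0 < x → 0 < y →
      x ^ (s * a + (1 - s)) * y ^ (1 - (s * a + (1 - s)))
        = x ^ (1 - s) * (x ^ a * y ^ (1 - a)) ^ s := by
    intro x y hx hy
    rw [mul_rpow (by positivity) (by positivity), ← rpow_mul hx.le, ← rpow_mul hy.le,
      ← mul_assoc, ← rpow_add hx]
    ring_nf
  have h := add_rpow_mul_rpow_le hs₀ hs₁ (sub_pos.2 hp₁) hp₀
    (mul_pos (rpow_pos_of_pos (sub_pos.2 hp₁) a) (rpow_pos_of_pos (sub_pos.2 hq₁) (1 - a)))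
    (mul_pos (rpow_pos_of_pos hp₀ a) (rpow_pos_of_pos hq₀ (1 - a)))
  rwa [sub_add_cancel, one_rpow, one_mul, ← split _ _ (sub_pos.2 hp₁) (sub_pos.2 hq₁),
    ← split _ _ hp₀ hq₀] at h

end chernoffCoeff

section pairRate

variable {g h p q : ℝ}

lemma pairRate_eq_neg_mul_log_chernoffCoeff (hgh : g + h ≠ 0) :
    pairRate g h p q = -(g + h) * log (chernoffCoeff (g / (g + h)) p q) := by
  rw [pairRate, chernoffCoeff, show h / (g + h) = 1 - g / (g + h) by field_simp; ring]

lemma pairRate_symm (g h p q : ℝ) : pairRate g h p q = pairRate h g (1 - q) (1 - p) := by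
  simp only [pairRate, sub_sub_cancel, add_comm h g]
  ring_nf

lemma pairRate_lt_pairRate_right {q' : ℝ} (hg : 0 < g) (hh : 0 < h) (hp : 0 < p) (hpq : p < q)
    (hqq' : q < q') (hq' : q' < 1) : pairRate g h p q < pairRate g h p q' := by
  have hgh : 0 < g + h := add_pos hg hh
  have ha₁ : g / (g + h) < 1 := (div_lt_one hgh).2 (by linarith)
  rw [pairRate_eq_neg_mul_log_chernoffCoeff hgh.ne', pairRate_eq_neg_mul_log_chernoffCoeff hgh.ne',
    neg_mul, neg_mul, neg_lt_neg_iff]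
  refine mul_lt_mul_of_pos_left (log_lt_log ?_ ?_) hgh
  · exact chernoffCoeff_pos hp (by linarith) (by linarith) hq'
  · exact chernoffCoeff_lt_chernoffCoeff_right (by positivity) ha₁ hp hpq hqq' hq'.le

lemma pairRate_lt_pairRate_left {p' : ℝ} (hg : 0 < g) (hh : 0 < h) (hp : 0 < p) (hpp' : p < p')
    (hp'q : p' < q) (hq : q < 1) : pairRate g h p' q < pairRate g h p q := by
  rw [pairRate_symm g h p' q, pairRate_symm g h p q]
  exact pairRate_lt_pairRate_right hh hg (by linarith) (by linarith) (by linarith) (by linarith)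

lemma pairRate_le_pairRate_of_le_left {g' : ℝ} (hg' : 0 < g') (hg'g : g' ≤ g) (hh : 0 < h)
    (hp₀ : 0 < p) (hp₁ : p < 1) (hq₀ : 0 < q) (hq₁ : q < 1) :
    pairRate g' h p q ≤ pairRate g h p q := by
  have hgh : 0 < g + h := by linarith
  have hg'h : 0 < g' + h := by linarith
  set s := (g' + h) / (g + h)
  -- `g / (g + h)` is the convex combination with weight `s` of `g' / (g' + h)` and `1`
  have hexp : s * (g' / (g' + h)) + (1 - s) = g / (g + h) := by
    simp only [s]; field_simp; ring
  have hs₁ : s ≤ 1 := (div_le_one hgh).2 (by linarith)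
  have hC := chernoffCoeff_le_rpow (a := g' / (g' + h)) (div_pos hg'h hgh).le hs₁ hp₀ hp₁ hq₀ hq₁
  rw [hexp] at hC
  have hlog := log_le_log (chernoffCoeff_pos hp₀ hp₁ hq₀ hq₁) hC
  rw [log_rpow (chernoffCoeff_pos hp₀ hp₁ hq₀ hq₁)] at hlog
  rw [pairRate_eq_neg_mul_log_chernoffCoeff hgh.ne', pairRate_eq_neg_mul_log_chernoffCoeff hg'h.ne']
  calc -(g' + h) * log (chernoffCoeff (g' / (g' + h)) p q)
      = -(g + h) * (s * log (chernoffCoeff (g' / (g' + h)) p q)) := by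
        simp only [s]; field_simp
    _ ≤ _ := mul_le_mul_of_nonpos_left hlog (by linarith)

lemma pairRate_le_pairRate_of_le_right {h' : ℝ} (hg : 0 < g) (hh' : 0 < h') (hh'h : h' ≤ h)
    (hp₀ : 0 < p) (hp₁ : p < 1) (hq₀ : 0 < q) (hq₁ : q < 1) :
    pairRate g h' p q ≤ pairRate g h p q := by
  rw [pairRate_symm g h' p q, pairRate_symm g h p q]
  exact pairRate_le_pairRate_of_le_left hh' hh'h hg (by linarith) (by linarith) (by linarith)
    (by linarith)

lemma pairRate_lt_pairRate_of_subinterval {g' h' p' q' : ℝ} (hg' : 0 < g') (hg'g : g' ≤ g)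
    (hh' : 0 < h') (hh'h : h' ≤ h) (hp : 0 < p) (hpp' : p < p') (hp'q' : p' < q') (hq'q : q' ≤ q)
    (hq : q < 1) : pairRate g' h' p' q' < pairRate g h p q :=
  calc pairRate g' h' p' q' ≤ pairRate g' h' p' q := by
        rcases hq'q.eq_or_lt with rfl | hlt
        · rfl
        · exact (pairRate_lt_pairRate_right hg' hh' (by linarith) hp'q' hlt hq).le
    _ < pairRate g' h' p q := pairRate_lt_pairRate_left hg' hh' hp hpp' (by linarith) hq
    _ ≤ pairRate g' h p q := pairRate_le_pairRate_of_le_right hg' hh' hh'h hp (by linarith)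
        (by linarith) hq
    _ ≤ pairRate g h p q := pairRate_le_pairRate_of_le_left hg' hg'g (by linarith) hp
        (by linarith) (by linarith) hq

end pairRate

lemma neg_mul_log_lt_neg_mul_log {g h p p' : ℝ} (hh : 0 < h) (hhg : h ≤ g) (hp : 0 < p)
    (hpp' : p < p') (hp' : p' < 1) : -h * log p' < -g * log p := by
  have hlog : log p < log p' := log_lt_log hp hpp'
  have hneg : log p < 0 := log_neg hp (by linarith)
  nlinarith

namespace IsEqualizedWithRate

variable {M : ℕ} {g t : ℕ → ℝ} {r : ℝ}

lemma strictMonoOn (ht : IsEqualizedWithRate M g t r) : StrictMonoOn t (Iic (M - 1)) :=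
  strictMonoOn_Iic_of_lt_succ fun i hi => by simpa using ht.2.2.1 i hi

lemma pos (ht : IsEqualizedWithRate M g t r) {i : ℕ} (hi₀ : 1 ≤ i) (hi₁ : i ≤ M - 1) : 0 < t i := by
  simpa [ht.1] using ht.strictMonoOn (mem_Iic.2 (Nat.zero_le _)) (mem_Iic.2 hi₁) hi₀

lemma lt_one (ht : IsEqualizedWithRate M g t r) {i : ℕ} (hi : i < M - 1) : t i < 1 := by
  simpa [ht.2.1] using ht.strictMonoOn (mem_Iic.2 hi.le) (mem_Iic.2 le_rfl) hi

lemma pairRate_eq (ht : IsEqualizedWithRate M g t r) {i : ℕ} (hi₀ : 1 ≤ i) (hi₁ : i + 1 ≤ M - 2) :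
    pairRate (g i) (g (i + 1)) (t i) (t (i + 1)) = r := by
  have := ht.2.2.2 (i + 1) (by omega) (by omega)
  rwa [rateAt, if_neg (by omega), if_neg (by omega), Nat.add_sub_cancel] at this

lemma rate_last (ht : IsEqualizedWithRate M g t r) (hM : 3 ≤ M) :
    -g (M - 2) * log (t (M - 2)) = r := by
  have := ht.2.2.2 (M - 1) (by omega) le_rfl
  rwa [rateAt, if_neg (by omega), if_pos rfl] at this

lemma reflect (ht : IsEqualizedWithRate M g t r) (hM : 3 ≤ M) :
    IsEqualizedWithRate M (fun j => g (M - 1 - j)) (fun i => 1 - t (M - 1 - i)) r := by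
  obtain ⟨h0, h1, hmono, hrate⟩ := ht
  refine ⟨by simp [h1], by simp [h0], fun i hi => ?_, fun i hi₀ hi₁ => ?_⟩
  · have := hmono (M - 2 - i) (by omega)
    rw [show M - 2 - i + 1 = M - 1 - i by omega] at this
    simp only [show M - 1 - (i + 1) = M - 2 - i by omega]
    linarith
  · rw [← hrate (M - i) (by omega) (by omega)]
    obtain rfl | rfl | hi : i = 1 ∨ i = M - 1 ∨ (2 ≤ i ∧ i ≤ M - 2) := by omega
    · simp only [rateAt, if_pos, show M - 1 ≠ 1 by omega, if_false, show M - 1 - 1 = M - 2 by omega,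
        sub_sub_cancel]
    · simp only [rateAt, show M - 1 ≠ 1 by omega, if_false, if_pos, show M - (M - 1) = 1 by omega,
        show M - 1 - (M - 2) = 1 by omega]
    · rw [rateAt, rateAt, if_neg (by omega), if_neg (by omega), if_neg (by omega),
        if_neg (by omega), pairRate_symm, sub_sub_cancel, sub_sub_cancel,
        show M - 1 - (i - 1) = M - i by omega, show M - i - 1 = M - 1 - i by omega]

lemma rate_lt_of_lt {gs s : ℕ → ℝ} {rs : ℝ} {k : ℕ} (ht : IsEqualizedWithRate M g t r)
    (hs : IsEqualizedWithRate M gs s rs) (hk₁ : 1 ≤ k) (hk₂ : k ≤ M - 2)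
    (hgs : ∀ j, k ≤ j → j ≤ M - 2 → 0 < gs j) (hgsg : ∀ j, k ≤ j → j ≤ M - 2 → gs j ≤ g j)
    (hts : t k < s k) : rs < r := by
  by_contra! hr
  -- the gap `t j < s j` propagates up, since otherwise the rate of `s` on `(j, j+1)` is below `r`
  have hgap : ∀ j, k ≤ j → j ≤ M - 2 → t j < s j := by
    intro j hkj
    induction j, hkj using Nat.le_induction with
    | base => exact fun _ => hts
    | succ j hkj ih =>
      intro hj
      by_contra! hle
      have hlt := pairRate_lt_pairRate_of_subinterval (hgs j hkj (by omega)) (hgsg j hkj (by omega))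
        (hgs (j + 1) (by omega) hj) (hgsg (j + 1) (by omega) hj) (ht.pos (by omega) (by omega))
        (ih (by omega)) (hs.strictMonoOn (mem_Iic.2 (by omega)) (mem_Iic.2 (by omega)) j.lt_succ_self)
        hle (ht.lt_one (by omega))
      rw [ht.pairRate_eq (by omega) hj, hs.pairRate_eq (by omega) hj] at hlt
      linarith
  have hlast := neg_mul_log_lt_neg_mul_log (hgs _ hk₂ le_rfl) (hgsg _ hk₂ le_rfl)
    (ht.pos (by omega) (by omega)) (hgap _ hk₂ le_rfl) (hs.lt_one (by omega))
  rw [ht.rate_last (by omega), hs.rate_last (by omega)] at hlast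
  linarith

end IsEqualizedWithRate

theorem equalized_level_shift_general
    (M k : ℕ) (hk1 : 1 ≤ k) (hk2 : k ≤ M - 2)
    (g gt : ℕ → ℝ)
    (hg : ∀ i, 1 ≤ i → i ≤ M - 2 → 0 < g i)
    (hgt : ∀ i, 1 ≤ i → i ≤ M - 2 → 0 < gt i)
    (habove : ∀ j, k + 1 ≤ j → j ≤ M - 2 → gt j ≤ g j)
    (hbelow : ∀ j, 1 ≤ j → j ≤ k - 1 → g j ≤ gt j)
    (hat : g k = gt k)
    (t ttil : ℕ → ℝ)
    (ht : IsEqualizedSol M g t) (httil : IsEqualizedSol M gt ttil) :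
    ttil k ≤ t k := by
  obtain ⟨r, ht⟩ := ht
  obtain ⟨rt, htt⟩ := httil
  by_contra! hlt
  have hge : ∀ j, k ≤ j → j ≤ M - 2 → gt j ≤ g j := fun j hkj hj =>
    hkj.eq_or_lt.elim (fun h => h ▸ hat.ge) (fun h => habove j h hj)
  have hle : ∀ j, 1 ≤ j → j ≤ k → g j ≤ gt j := fun j hj hjk =>
    hjk.eq_or_lt.elim (fun h => h ▸ hat.le) (fun h => hbelow j hj (by omega))
  have hup : rt < r :=
    ht.rate_lt_of_lt htt hk1 hk2 (fun j hj hj' => hgt j (by omega) hj') hge hlt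
  -- the same argument for the reflected problem, at level `M - 1 - k`
  have hdown : r < rt := by
    refine (htt.reflect (by omega)).rate_lt_of_lt (ht.reflect (by omega)) (k := M - 1 - k)
      (by omega) (by omega) (fun j _ _ => hg _ (by omega) (by omega))
      (fun j _ _ => hle _ (by omega) (by omega)) ?_
    simp only [show M - 1 - (M - 1 - k) = k by omega]
    linarith
  exact lt_asymm hup hdown

/-- **Monotone shift of matching weights shifts the levels.**
If weights `g, g̃` agree at `k`, with `g_j ≥ g̃_j` above `k` and `g_j ≤ g̃_j` below `k`,
then the corresponding equalized solutions satisfy `t*_k ≥ t̃*_k`. -/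
theorem equalized_level_shift
    (M k : ℕ) (hM : 3 ≤ M) (hk1 : 1 ≤ k) (hk2 : k ≤ M - 2)
    (g gt : ℕ → ℝ)
    (hg : ∀ i, 1 ≤ i → i ≤ M - 2 → 0 < g i)
    (hgt : ∀ i, 1 ≤ i → i ≤ M - 2 → 0 < gt i)
    (habove : ∀ j, k + 1 ≤ j → j ≤ M - 2 → gt j ≤ g j)
    (hbelow : ∀ j, 1 ≤ j → j ≤ k - 1 → g j ≤ gt j)
    (hat : g k = gt k)
    (t ttil : ℕ → ℝ)
    (ht : IsEqualizedSol M g t) (httil : IsEqualizedSol M gt ttil) :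
    ttil k ≤ t k :=
  equalized_level_shift_general M k hk1 hk2 g gt hg hgt habove hbelow hat t ttil ht httil
end
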